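/- Let Z ∈ ℝ^{n×q} with 0 < q < n, and let H_1, …, H_{r−1} ∈ ℝ^{q×q} be symmetric matrices with all entries in {0,1}, each H_j ≠ 0, and with pairwise disjoint supports (for each matrix position (k,l), at most one j has (H_j)_{kl} = 1). For v ∈ ℝ^r define Σ(v) = Z (Σ_{j=1}^{r−1} v_j H_j) Zᵀ + v_r I_n, fix ψ ∈ ℝ^r with Σ(ψ) positive definite, set A_j(ψ) = Σ(ψ)^{-1/2} Z H_j Zᵀ Σ(ψ)^{-1/2} for j < r and A_r(ψ) = Σ(ψ)^{-1}, and let I(ψ) ∈ ℝ^{r×r} have entries I(ψ)_{ij} = tr(A_i(ψ)A_j(ψ))/2. If Z has full column rank q, then I(ψ) is positive definite. -/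

import Mathlib

open Matrix

open Classical in
/-- The positive semidefinite square root of a matrix (junk value `0` off the
positive semidefinite matrices). -/
noncomputable def msqrt {ι : Type*} [Fintype ι] [DecidableEq ι] (M : Matrix ι ι ℝ) :
    Matrix ι ι ℝ :=
  if h : M.PosSemidef then
    (h.1.eigenvectorUnitary : Matrix ι ι ℝ) * diagonal (Real.sqrt ∘ h.1.eigenvalues) *
      (star h.1.eigenvectorUnitary : Matrix ι ι ℝ) else 0

/-- `Σ(v) = Z (∑_{j<r} v_j H_j) Zᵀ + v_r I_n`. -/
noncomputable def SigmaMat {n q r : ℕ} (Z : Matrix (Fin n) (Fin q) ℝ)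
    (H : Fin r → Matrix (Fin q) (Fin q) ℝ) (v : Fin (r + 1) → ℝ) :
    Matrix (Fin n) (Fin n) ℝ :=
  Z * (∑ j, v j.castSucc • H j) * Zᵀ + v (Fin.last r) • 1

/-- `A_j(ψ) = Σ(ψ)^{-1/2} Z H_j Zᵀ Σ(ψ)^{-1/2}` for `j < r` and `A_r(ψ) = Σ(ψ)⁻¹`. -/
noncomputable def Aj {n q r : ℕ} (Z : Matrix (Fin n) (Fin q) ℝ)
    (H : Fin r → Matrix (Fin q) (Fin q) ℝ) (ψ : Fin (r + 1) → ℝ) (j : Fin (r + 1)) :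
    Matrix (Fin n) (Fin n) ℝ :=
  Fin.lastCases (SigmaMat Z H ψ)⁻¹
    (fun i => (msqrt (SigmaMat Z H ψ))⁻¹ * (Z * H i * Zᵀ) * (msqrt (SigmaMat Z H ψ))⁻¹) j

/-- The Fisher information matrix `I(ψ)_{ij} = tr(A_i(ψ) A_j(ψ))/2`. -/
noncomputable def infoMat {n q r : ℕ} (Z : Matrix (Fin n) (Fin q) ℝ)
    (H : Fin r → Matrix (Fin q) (Fin q) ℝ) (ψ : Fin (r + 1) → ℝ) :
    Matrix (Fin (r + 1)) (Fin (r + 1)) ℝ :=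
  Matrix.of fun i j => (Aj Z H ψ i * Aj Z H ψ j).trace / 2

/-! `I(ψ)` is half the Gram matrix of the symmetric matrices `A_i(ψ)` for the trace inner
product, so it is positive definite once the `A_i(ψ)` are linearly independent. As
`∑ xᵢ Aᵢ(ψ) = Σ(ψ)^{-1/2} Σ(x) Σ(ψ)^{-1/2}`, this amounts to `Σ(x) = 0 → x = 0`. If `Σ(x) = 0`,
then `Z M Zᵀ = -x_r I_n` with `M = ∑_{j<r} x_j H_j`; the left side has rank at most `q < n`, so
`x_r = 0`, the full column rank of `Z` cancels it to `M = 0`, and the disjoint supports make the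
`H_j` linearly independent. -/

namespace Matrix

section rank

variable {l m n K : Type*} [Field K]

lemma eq_zero_of_rank_eq_zero [Fintype m] {A : Matrix l m K} (h : A.rank = 0) : A = 0 := by
  classical
  rw [rank, Submodule.finrank_eq_zero, LinearMap.range_eq_bot] at h
  ext i j
  simpa using congrFun (LinearMap.congr_fun h (Pi.single j 1)) i

variable [Fintype l] [Fintype m] [Fintype n]

lemma right_eq_zero_of_mul_eq_zero_of_rank_eq_card {A : Matrix l m K} {B : Matrix m n K}
    (hA : A.rank = Fintype.card m) (h : A * B = 0) : B = 0 :=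
  eq_zero_of_rank_eq_zero (by have := rank_add_rank_le_card_of_mul_eq_zero h; omega)

lemma left_eq_zero_of_mul_eq_zero_of_rank_eq_card {A : Matrix l m K} {B : Matrix m n K}
    (hB : B.rank = Fintype.card m) (h : A * B = 0) : A = 0 :=
  eq_zero_of_rank_eq_zero (by have := rank_add_rank_le_card_of_mul_eq_zero h; omega)

lemma eq_zero_of_mul_eq_smul_one_of_card_lt [DecidableEq l]
    (hlt : Fintype.card m < Fintype.card l) {A : Matrix l m K} {B : Matrix m l K} {c : K}
    (h : A * B = c • 1) : c = 0 := by
  by_contra hc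
  have hrank : (c • 1 : Matrix l l K).rank = Fintype.card l := by
    rw [rank_of_isUnit]
    simp [isUnit_iff_isUnit_det, hc]
  have := (rank_mul_le_left A B).trans (rank_le_card_width A)
  rw [h, hrank] at this
  omega

end rank

section real

variable {ι m : Type*} [Fintype m]

lemma IsSymm.mul_mul_same {R M : Matrix m m ℝ} (hM : M.IsSymm) (hR : R.IsSymm) :
    (R * M * R).IsSymm := by
  simp only [IsSymm, transpose_mul, hR.eq, hM.eq, Matrix.mul_assoc]

lemma trace_mul_self_pos_of_isSymm {B : Matrix m m ℝ} (hB : B.IsSymm) (hB0 : B ≠ 0) :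
    0 < (B * B).trace := by
  nth_rewrite 1 [← hB.eq]
  refine (posSemidef_conjTranspose_mul_self B).trace_nonneg.lt_of_ne' ?_
  exact fun h => hB0 (trace_conjTranspose_mul_self_eq_zero_iff.mp h)

lemma posDef_of_linearIndependent_of_isSymm [Fintype ι] {A : ι → Matrix m m ℝ}
    (hA : ∀ i, (A i).IsSymm) (hli : LinearIndependent ℝ A) :
    (of fun i j => (A i * A j).trace).PosDef := by
  rw [posDef_iff_dotProduct_mulVec]
  refine ⟨?_, fun x hx => ?_⟩
  · ext i j
    exact trace_mul_comm _ _
  have hquad : star x ⬝ᵥ (of fun i j => (A i * A j).trace) *ᵥ x =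
      ((∑ i, x i • A i) * ∑ i, x i • A i).trace := by
    simp only [Finset.sum_mul, Finset.mul_sum, smul_mul_smul_comm, trace_sum, trace_smul,
      dotProduct, mulVec, of_apply, star_trivial, smul_eq_mul]
    exact Finset.sum_congr rfl fun i _ => Finset.sum_congr rfl fun j _ => by
      rw [trace_mul_comm (A j)]; ring
  rw [hquad]
  refine trace_mul_self_pos_of_isSymm ?_ fun h => hx ?_
  · simp [IsSymm, transpose_sum, (hA _).eq]
  · exact funext (Fintype.linearIndependent_iff.mp hli x h)

end real

lemma linearIndependent_of_disjoint_support {ι m n R : Type*} [Fintype ι] [Ring R]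
    {H : ι → Matrix m n R} (h01 : ∀ j k l, H j k l = 0 ∨ H j k l = 1) (hne : ∀ j, H j ≠ 0)
    (hdisj : ∀ k l j j', H j k l = 1 → H j' k l = 1 → j = j') :
    LinearIndependent R H := by
  refine Fintype.linearIndependent_iff.mpr fun g hg j => ?_
  obtain ⟨k, l, hkl⟩ : ∃ k l, H j k l = 1 := by
    by_contra! h
    exact hne j (ext fun k l => (h01 j k l).resolve_right (h k l))
  have hentry : ∑ j', g j' * H j' k l = g j := by
    refine (Finset.sum_eq_single j (fun j' _ hj' => ?_) (by simp)).trans (by rw [hkl, mul_one])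
    rcases h01 j' k l with h0 | h1
    · rw [h0, mul_zero]
    · exact absurd (hdisj k l j' j h1 hkl) hj'
  have hkl0 := congrFun (congrFun hg k) l
  simp only [sum_apply, smul_apply, smul_eq_mul, zero_apply] at hkl0
  rwa [hentry] at hkl0

end Matrix

section msqrt

variable {ι : Type*} [Fintype ι] [DecidableEq ι] {M : Matrix ι ι ℝ}

lemma msqrt_eq_cfc (hM : M.PosSemidef) : msqrt M = cfc Real.sqrt M := by
  rw [msqrt, dif_pos hM, hM.1.cfc_eq, IsHermitian.cfc, Unitary.conjStarAlgAut_apply]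
  rfl

lemma msqrt_mul_self (hM : M.PosSemidef) : msqrt M * msqrt M = M := by
  rw [msqrt_eq_cfc hM, ← cfc_mul Real.sqrt Real.sqrt M]
  conv_rhs => rw [← cfc_id' ℝ M hM.1]
  exact cfc_congr fun x hx =>
    Real.mul_self_sqrt ((posSemidef_iff_isHermitian_and_spectrum_nonneg.mp hM).2 hx)

lemma isSymm_msqrt (hM : M.PosSemidef) : (msqrt M).IsSymm := by
  rw [msqrt_eq_cfc hM]
  exact isSymm_conjTranspose_iff.mp (congrArg transpose (cfc_predicate Real.sqrt M))

lemma isUnit_det_msqrt (hM : M.PosDef) : IsUnit (msqrt M).det := by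
  have hdet : (msqrt M).det * (msqrt M).det = M.det := by
    rw [← det_mul, msqrt_mul_self hM.posSemidef]
  exact isUnit_iff_ne_zero.mpr fun h => hM.det_pos.ne' (by rw [← hdet, h, zero_mul])

end msqrt

section covariance

variable {n q r : ℕ} {Z : Matrix (Fin n) (Fin q) ℝ} {H : Fin r → Matrix (Fin q) (Fin q) ℝ}
  {ψ : Fin (r + 1) → ℝ}

lemma isSymm_sigmaMat (hH : ∀ j, (H j).IsSymm) (v : Fin (r + 1) → ℝ) :
    (SigmaMat Z H v).IsSymm := by
  simp [SigmaMat, IsSymm, transpose_sum, Matrix.mul_assoc, (hH _).eq]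

lemma sum_smul_Aj (hψ : (SigmaMat Z H ψ).PosSemidef) (x : Fin (r + 1) → ℝ) :
    ∑ i, x i • Aj Z H ψ i =
      (msqrt (SigmaMat Z H ψ))⁻¹ * SigmaMat Z H x * (msqrt (SigmaMat Z H ψ))⁻¹ := by
  simp only [Fin.sum_univ_castSucc, Aj, Fin.lastCases_castSucc, Fin.lastCases_last]
  set R := msqrt (SigmaMat Z H ψ)
  have hlast : (SigmaMat Z H ψ)⁻¹ = R⁻¹ * 1 * R⁻¹ := by
    rw [← msqrt_mul_self hψ, Matrix.mul_one, Matrix.mul_inv_rev]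
  rw [hlast]
  clear_value R
  simp only [SigmaMat, Matrix.mul_add, Matrix.add_mul, Matrix.mul_sum, Matrix.sum_mul,
    Matrix.mul_smul, Matrix.smul_mul]

lemma Aj_eq (hψ : (SigmaMat Z H ψ).PosSemidef) (i : Fin (r + 1)) :
    Aj Z H ψ i = (msqrt (SigmaMat Z H ψ))⁻¹ * SigmaMat Z H (Pi.single i 1) *
      (msqrt (SigmaMat Z H ψ))⁻¹ := by
  rw [← sum_smul_Aj hψ]
  simp [Pi.single_apply]

lemma isSymm_Aj (hH : ∀ j, (H j).IsSymm) (hψ : (SigmaMat Z H ψ).PosSemidef) (i : Fin (r + 1)) :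
    (Aj Z H ψ i).IsSymm := by
  rw [Aj_eq hψ]
  refine (isSymm_sigmaMat hH _).mul_mul_same ?_
  rw [IsSymm, transpose_nonsing_inv, (isSymm_msqrt hψ).eq]

lemma eq_zero_of_sigmaMat_eq_zero (hqn : q < n) (hrank : Z.rank = q)
    (hli : LinearIndependent ℝ H) {v : Fin (r + 1) → ℝ} (hv : SigmaMat Z H v = 0) : v = 0 := by
  set M := ∑ j, v j.castSucc • H j
  have hsplit : Z * (M * Zᵀ) = -v (Fin.last r) • 1 := by
    rw [← Matrix.mul_assoc, neg_smul, eq_neg_iff_add_eq_zero]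
    exact hv
  have hlast : v (Fin.last r) = 0 :=
    neg_eq_zero.mp (eq_zero_of_mul_eq_smul_one_of_card_lt (by simpa using hqn) hsplit)
  have hM : M = 0 := by
    rw [hlast, neg_zero, zero_smul, ← Matrix.mul_assoc] at hsplit
    exact right_eq_zero_of_mul_eq_zero_of_rank_eq_card (by simpa using hrank)
      (left_eq_zero_of_mul_eq_zero_of_rank_eq_card (by simpa using hrank) hsplit)
  have hcast := Fintype.linearIndependent_iff.mp hli _ hM
  funext i
  exact Fin.lastCases hlast hcast i

lemma linearIndependent_Aj (hqn : q < n) (hrank : Z.rank = q) (hli : LinearIndependent ℝ H)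
    (hψ : (SigmaMat Z H ψ).PosDef) : LinearIndependent ℝ (Aj Z H ψ) := by
  refine Fintype.linearIndependent_iff.mpr fun x hx => ?_
  have hR := isUnit_det_msqrt hψ
  rw [sum_smul_Aj hψ.posSemidef] at hx
  have hsigma : SigmaMat Z H x = 0 := by
    simpa [Matrix.mul_assoc, mul_nonsing_inv_cancel_left _ _ hR, nonsing_inv_mul _ hR] using
      congrArg (fun B => msqrt (SigmaMat Z H ψ) * B * msqrt (SigmaMat Z H ψ)) hx
  exact congrFun (eq_zero_of_sigmaMat_eq_zero hqn hrank hli hsigma)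

end covariance

theorem stmt8_general {n q r : ℕ} (hqn : q < n)
    (Z : Matrix (Fin n) (Fin q) ℝ)
    (H : Fin r → Matrix (Fin q) (Fin q) ℝ) (hH : ∀ j, (H j).IsSymm)
    (h01 : ∀ j k l, H j k l = 0 ∨ H j k l = 1)
    (hne : ∀ j, H j ≠ 0)
    (hdisj : ∀ (k l : Fin q) (j j' : Fin r), H j k l = 1 → H j' k l = 1 → j = j')
    (hrank : Z.rank = q)
    (ψ : Fin (r + 1) → ℝ) (hψ : (SigmaMat Z H ψ).PosDef) :
    (infoMat Z H ψ).PosDef := by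
  have hgram := posDef_of_linearIndependent_of_isSymm (isSymm_Aj hH hψ.posSemidef)
    (linearIndependent_Aj hqn hrank (linearIndependent_of_disjoint_support h01 hne hdisj) hψ)
  have hinfo : infoMat Z H ψ = (2⁻¹ : ℝ) • of fun i j => (Aj Z H ψ i * Aj Z H ψ j).trace := by
    ext i j
    simp [infoMat, div_eq_inv_mul]
  rw [hinfo]
  exact hgram.smul (by norm_num)

/-- If `0 < q < n`, the `H_j` are nonzero symmetric 0-1 matrices with pairwise
disjoint supports, and `Z` has full column rank `q`, then the Fisher information
`I(ψ)` is positive definite. -/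
theorem stmt8 {n q r : ℕ} (hq : 0 < q) (hqn : q < n)
    (Z : Matrix (Fin n) (Fin q) ℝ)
    (H : Fin r → Matrix (Fin q) (Fin q) ℝ) (hH : ∀ j, (H j).IsSymm)
    (h01 : ∀ j k l, H j k l = 0 ∨ H j k l = 1)
    (hne : ∀ j, H j ≠ 0)
    (hdisj : ∀ (k l : Fin q) (j j' : Fin r), H j k l = 1 → H j' k l = 1 → j = j')
    (hrank : Z.rank = q)
    (ψ : Fin (r + 1) → ℝ) (hψ : (SigmaMat Z H ψ).PosDef) :
    (infoMat Z H ψ).PosDef :=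
  stmt8_general hqn Z H hH h01 hne hdisj hrank ψ hψ
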